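/- arXiv:1112.0129 — 3 statements merged into one kernel-verified Lean document; each statement's English description precedes it below -/
import Mathlib

section
/- Let d ≥ 2, α ∈ (1,2), S the unit sphere in ℝ^d with normalized surface measure σ, and for x ∉ S, y ∈ S let P(x,y) = c · ||x|² − 1|^{α−1} / |x − y|^{d+α−2} with c > 0. For every β > 0 there is a constant C = C(α, β, d, c) > 0 such that for every y ∈ S, every finite positive Borel measure μ on S, and every x in the nontangential cone Γ_β(y) = {x : |x| ≠ 1, |x − y| < (1+β)|1 − |x||} with |x| < 2, one has ∫_S P(x,z) μ(dz) ≤ C · sup_{r>0} μ(B(y,r) ∩ S) / σ(B(y,r) ∩ S). -/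
/-!
Rotation invariance makes `σ (ball y r)` the same for all unit vectors `y`. Averaging it over
the shell `1 < ‖x‖ < 1 + r` with `y = x / ‖x‖` and exchanging the two integrals bounds it by
`vol (ball 0 (2 r)) / vol (shell) ≤ 2 ^ d r ^ (d - 1)`.

For `x` in the cone with `t = |1 - ‖x‖|`, the distance `‖x - z‖` to a unit vector `z` is comparable
to `max t ‖z - y‖`, so the kernel is at most a constant times
`t ^ (α - 1) * max t ‖z - y‖ ^ (-(d + α - 2))`. Covering the sphere by the balls
`ball y (2 ^ (n + 1) t)` and using `μ (ball y r) ≤ L σ (ball y r) ≤ 2 ^ d L r ^ (d - 1)` turns the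
integral into a geometric series of ratio `2 ^ (1 - α) < 1`, whose sum `≈ L t ^ (1 - α)` cancels
the factor `t ^ (α - 1)`.
-/

open MeasureTheory Metric Module
open scoped ENNReal

theorem dist_inv_norm_smul_self {F : Type*} [NormedAddCommGroup F] [NormedSpace ℝ F] {x : F}
    (hx : x ≠ 0) : dist x (‖x‖⁻¹ • x) = |‖x‖ - 1| := by
  have hx' : ‖x‖ ≠ 0 := norm_ne_zero_iff.mpr hx
  have : x - ‖x‖⁻¹ • x = (1 - ‖x‖⁻¹) • x := by rw [sub_smul, one_smul]
  rw [dist_eq_norm, this, norm_smul, Real.norm_eq_abs, ← abs_norm x, ← abs_mul, abs_norm]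
  congr 1
  field_simp

section InnerProductSpace

variable {E : Type*} [NormedAddCommGroup E] [InnerProductSpace ℝ E]

theorem measure_ball_eq_of_norm_eq [MeasurableSpace E] [BorelSpace E] {σ : Measure E}
    (hσ : ∀ R : E ≃ₗᵢ[ℝ] E, σ.map R = σ) {u v : E} (h : ‖u‖ = ‖v‖) (r : ℝ) :
    σ (ball u r) = σ (ball v r) := by
  set R := (ℝ ∙ (u - v))ᗮ.reflection
  have hRu : R u = v := Submodule.reflection_sub h
  calc σ (ball u r) = σ (R ⁻¹' ball v r) := by rw [R.preimage_ball, ← hRu, R.symm_apply_apply]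
    _ = σ (ball v r) := by rw [← Measure.map_apply R.continuous.measurable measurableSet_ball, hσ]

section Haar

variable [MeasurableSpace E] [BorelSpace E] [FiniteDimensional ℝ E]

theorem addHaar_ball_diff_ball_ge [Nontrivial E] (μ : Measure E)
    [μ.IsAddHaarMeasure] {r : ℝ} (hr : 0 ≤ r) :
    ENNReal.ofReal r * μ (ball 0 1) ≤ μ (ball 0 (1 + r) \ ball 0 1) := by
  rw [measure_sdiff (ball_subset_ball (by linarith)) measurableSet_ball.nullMeasurableSet
    measure_ball_lt_top.ne, Measure.addHaar_ball μ 0 (r := 1 + r) (by linarith)]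
  refine ENNReal.le_sub_of_add_le_right measure_ball_lt_top.ne ?_
  rw [← add_one_mul, ← ENNReal.ofReal_one, ← ENNReal.ofReal_add hr zero_le_one, add_comm r]
  gcongr
  exact le_self_pow₀ (by linarith) finrank_pos.ne'

theorem measure_ball_mul_addHaar_ball_diff_ball_le (μ : Measure E)
    [μ.IsAddHaarMeasure] {σ : Measure E} [IsProbabilityMeasure σ]
    (hσ : ∀ R : E ≃ₗᵢ[ℝ] E, σ.map R = σ) {y : E} (hy : ‖y‖ = 1) (r : ℝ) :
    σ (ball y r) * μ (ball 0 (1 + r) \ ball 0 1) ≤ μ (ball 0 (2 * r)) := by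
  set A := ball (0 : E) (1 + r) \ ball 0 1
  have hA : ∀ x ∈ A, x ≠ 0 ∧ dist x (‖x‖⁻¹ • x) < r := by
    intro x ⟨hx, hx1⟩
    simp only [mem_ball, dist_zero_right, not_lt] at hx hx1
    have hx0 : x ≠ 0 := norm_pos_iff.mp (by linarith)
    refine ⟨hx0, ?_⟩
    rw [dist_inv_norm_smul_self hx0, abs_of_nonneg (by linarith)]
    linarith
  set S := {p : E × E | dist p.2 (‖p.1‖⁻¹ • p.1) < r}
  have hS : MeasurableSet S := measurableSet_lt (by fun_prop) measurable_const
  calc σ (ball y r) * μ A = ∫⁻ x in A, σ (ball (‖x‖⁻¹ • x) r) ∂μ := by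
        rw [← setLIntegral_const]
        refine setLIntegral_congr_fun (measurableSet_ball.diff measurableSet_ball) fun x hx => ?_
        exact measure_ball_eq_of_norm_eq hσ
          (by simpa [hy] using (norm_smul_inv_norm (𝕜 := ℝ) (hA x hx).1).symm) r
    _ = (μ.restrict A).prod σ S := (Measure.prod_apply hS).symm
    _ = ∫⁻ z, μ.restrict A {x | dist z (‖x‖⁻¹ • x) < r} ∂σ := Measure.prod_apply_symm hS
    _ ≤ ∫⁻ z, μ (ball z (2 * r)) ∂σ := by
        refine lintegral_mono fun z => ?_
        rw [Measure.restrict_apply' (measurableSet_ball.diff measurableSet_ball)]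
        refine measure_mono fun x ⟨hxz, hx⟩ => ?_
        rw [mem_ball, two_mul]
        calc dist x z ≤ dist x (‖x‖⁻¹ • x) + dist z (‖x‖⁻¹ • x) := dist_triangle_right _ _ _
          _ < r + r := add_lt_add (hA x hx).2 hxz
    _ = μ (ball 0 (2 * r)) := by simp [Measure.addHaar_ball_center]

theorem measure_ball_le_of_forall_map_eq {σ : Measure E} [IsProbabilityMeasure σ]
    (hσ : ∀ R : E ≃ₗᵢ[ℝ] E, σ.map R = σ) {y : E} (hy : ‖y‖ = 1) {r : ℝ} (hr : 0 < r) :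
    σ (ball y r) ≤ ENNReal.ofReal (2 ^ finrank ℝ E * r ^ ((finrank ℝ E : ℝ) - 1)) := by
  have : Nontrivial E := ⟨y, 0, norm_ne_zero_iff.mp (by rw [hy]; exact one_ne_zero)⟩
  set μ : Measure E := Measure.addHaar
  have hω : ENNReal.ofReal r * μ (ball 0 1) ≠ 0 :=
    mul_ne_zero (by simpa using hr) (measure_ball_pos μ 0 one_pos).ne'
  have hω' : ENNReal.ofReal r * μ (ball 0 1) ≠ ∞ :=
    ENNReal.mul_ne_top ENNReal.ofReal_ne_top measure_ball_lt_top.ne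
  have hscale : (2 * r) ^ finrank ℝ E = 2 ^ finrank ℝ E * r ^ ((finrank ℝ E : ℝ) - 1) * r := by
    rw [mul_pow, Real.rpow_sub_one hr.ne', Real.rpow_natCast, mul_assoc, div_mul_cancel₀ _ hr.ne']
  refine (ENNReal.mul_le_mul_iff_left hω hω').mp ?_
  calc σ (ball y r) * (ENNReal.ofReal r * μ (ball 0 1))
      ≤ σ (ball y r) * μ (ball 0 (1 + r) \ ball 0 1) := by
        gcongr; exact addHaar_ball_diff_ball_ge μ hr.le
    _ ≤ μ (ball 0 (2 * r)) := measure_ball_mul_addHaar_ball_diff_ball_le μ hσ hy r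
    _ = ENNReal.ofReal (2 ^ finrank ℝ E * r ^ ((finrank ℝ E : ℝ) - 1))
          * (ENNReal.ofReal r * μ (ball 0 1)) := by
        rw [Measure.addHaar_ball μ 0 (by positivity), hscale, ENNReal.ofReal_mul (by positivity),
          mul_assoc]

end Haar

end InnerProductSpace

section Dyadic

variable {X : Type*} [PseudoMetricSpace X]

theorem ofReal_max_rpow_neg_le_tsum_indicator (y z : X) {s e : ℝ} (hs : 0 < s) (he : 0 ≤ e) :
    ENNReal.ofReal (max s (dist z y) ^ (-e)) ≤
      ∑' n : ℕ, (ball y (2 ^ (n + 1) * s)).indicator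
        (fun _ => ENNReal.ofReal ((2 ^ n * s) ^ (-e))) z := by
  obtain ⟨n, hn, hn'⟩ := exists_nat_pow_near ((one_le_div hs).mpr (le_max_left s (dist z y)))
    one_lt_two
  rw [le_div_iff₀ hs] at hn
  rw [div_lt_iff₀ hs] at hn'
  refine le_trans ?_ (ENNReal.le_tsum n)
  rw [Set.indicator_of_mem (mem_ball.mpr ((le_max_right _ _).trans_lt hn'))]
  exact ENNReal.ofReal_le_ofReal (Real.rpow_le_rpow_of_nonpos (by positivity) hn (by linarith))

theorem lintegral_ofReal_max_rpow_neg_le [MeasurableSpace X] [OpensMeasurableSpace X]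
    (μ : Measure X) (y : X) {s M a e : ℝ} (hs : 0 < s) (he : 0 ≤ e) (hae : a < e)
    (hμ : ∀ r, 0 < r → μ (ball y r) ≤ ENNReal.ofReal (M * r ^ a)) :
    ∫⁻ z, ENNReal.ofReal (max s (dist z y) ^ (-e)) ∂μ ≤
      ENNReal.ofReal (2 ^ a / (1 - 2 ^ (a - e)) * M * s ^ (a - e)) := by
  set ρ : ℝ := 2 ^ (a - e)
  have hρ : ρ < 1 := Real.rpow_lt_one_of_one_lt_of_neg one_lt_two (by linarith)
  have hρ' : 0 < 1 - ρ := by linarith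
  have hterm : ∀ n : ℕ, (2 ^ n * s) ^ (-e) * (M * (2 ^ (n + 1) * s) ^ a) =
      M * (2 ^ a * s ^ (a - e) * ρ ^ n) := by
    intro n
    have hq : 0 < (2 : ℝ) ^ n * s := by positivity
    have hsplit : (2 ^ n * s) ^ (-e) * (2 ^ n * s) ^ a = ρ ^ n * s ^ (a - e) := by
      rw [← Real.rpow_add hq, Real.rpow_pow_comm zero_le_two, ← Real.mul_rpow (by positivity) hs.le,
        neg_add_eq_sub]
    rw [pow_succ, mul_comm _ (2 : ℝ), mul_assoc, Real.mul_rpow zero_le_two hq.le]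
    linear_combination M * 2 ^ a * hsplit
  calc ∫⁻ z, ENNReal.ofReal (max s (dist z y) ^ (-e)) ∂μ
      ≤ ∫⁻ z, ∑' n : ℕ, (ball y (2 ^ (n + 1) * s)).indicator
          (fun _ => ENNReal.ofReal ((2 ^ n * s) ^ (-e))) z ∂μ :=
        lintegral_mono fun z => ofReal_max_rpow_neg_le_tsum_indicator y z hs he
    _ = ∑' n : ℕ, ENNReal.ofReal ((2 ^ n * s) ^ (-e)) * μ (ball y (2 ^ (n + 1) * s)) := by
        rw [lintegral_tsum fun n => (measurable_const.indicator measurableSet_ball).aemeasurable]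
        simp only [lintegral_indicator_const measurableSet_ball]
    _ ≤ ∑' n : ℕ, ENNReal.ofReal M * ENNReal.ofReal (2 ^ a * s ^ (a - e) * ρ ^ n) := by
        refine ENNReal.tsum_le_tsum fun n => ?_
        grw [hμ _ (by positivity), ← ENNReal.ofReal_mul (by positivity), hterm,
          ENNReal.ofReal_mul' (by positivity)]
    _ = ENNReal.ofReal (2 ^ a / (1 - ρ) * M * s ^ (a - e)) := by
        rw [ENNReal.tsum_mul_left, ← ENNReal.ofReal_tsum_of_nonneg (fun n => by positivity)
          ((summable_geometric_of_lt_one (by positivity) hρ).mul_left _), tsum_mul_left,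
          tsum_geometric_of_lt_one (by positivity) hρ, ← ENNReal.ofReal_mul' (by positivity)]
        congr 1
        ring

end Dyadic

theorem integral_le_of_lintegral_ofReal_le {Ω : Type*} [MeasurableSpace Ω] {μ : Measure Ω}
    {f : Ω → ℝ} {b : ℝ} (hb : 0 ≤ b) (h : ∫⁻ ω, ENNReal.ofReal (f ω) ∂μ ≤ ENNReal.ofReal b) :
    ∫ ω, f ω ∂μ ≤ b := by
  by_cases hf : Integrable f μ
  · rw [integral_eq_lintegral_pos_part_sub_lintegral_neg_part hf]
    linarith [ENNReal.toReal_le_of_le_ofReal hb h,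
      (∫⁻ ω, ENNReal.ofReal (-f ω) ∂μ).toReal_nonneg]
  · rwa [integral_undef hf]

theorem nonneg_of_forall_toReal_measure_ball_le {X : Type*} [PseudoMetricSpace X]
    [MeasurableSpace X] {μ σ : Measure X} [IsProbabilityMeasure σ] {y : X} {L : ℝ}
    (hL : ∀ r, 0 < r → (μ (ball y r)).toReal ≤ L * (σ (ball y r)).toReal) : 0 ≤ L := by
  obtain ⟨n, hn⟩ : ∃ n : ℕ, σ (ball y (n + 1)) ≠ 0 := by
    by_contra! h
    simpa [iUnion_ball_nat_succ] using measure_iUnion_null h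
  refine le_of_mul_le_mul_right ?_ (ENNReal.toReal_pos hn (measure_ne_top σ _))
  rw [zero_mul]
  exact ENNReal.toReal_nonneg.trans (hL _ (by positivity))

section Cone

variable {E : Type*} [SeminormedAddCommGroup E] {x y z : E} {β : ℝ}

theorem one_add_pos_of_norm_sub_lt (hx : ‖x - y‖ < (1 + β) * |1 - ‖x‖|) : 0 < 1 + β :=
  pos_of_mul_pos_left ((norm_nonneg _).trans_lt hx) (abs_nonneg _)

theorem max_abs_one_sub_norm_dist_le (hz : ‖z‖ = 1) (hx : ‖x - y‖ < (1 + β) * |1 - ‖x‖|) :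
    max |1 - ‖x‖| (dist z y) ≤ (2 + β) * ‖x - z‖ := by
  have ht : |1 - ‖x‖| ≤ ‖x - z‖ := by
    simpa [hz, abs_sub_comm] using abs_norm_sub_norm_le x z
  have hβ := one_add_pos_of_norm_sub_lt hx
  have hzy : dist z y ≤ ‖x - z‖ + ‖x - y‖ := by
    rw [dist_eq_norm, norm_sub_rev x z]
    exact norm_sub_le_norm_sub_add_norm_sub z x y
  refine max_le (by nlinarith [norm_nonneg (x - z)]) ?_
  nlinarith [norm_nonneg (x - z)]

theorem mul_rpow_div_norm_sub_rpow_le {α c e : ℝ} (hc : 0 ≤ c) (hα : 1 ≤ α) (he : 0 ≤ e)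
    (hx1 : ‖x‖ ≠ 1) (hx2 : ‖x‖ < 2) (hz : ‖z‖ = 1) (hx : ‖x - y‖ < (1 + β) * |1 - ‖x‖|) :
    c * |‖x‖ ^ 2 - 1| ^ (α - 1) / ‖x - z‖ ^ e ≤
      c * 3 ^ (α - 1) * (2 + β) ^ e * |1 - ‖x‖| ^ (α - 1) *
        max |1 - ‖x‖| (dist z y) ^ (-e) := by
  set t := |1 - ‖x‖|
  set m := max t (dist z y)
  have ht : 0 < t := abs_pos.mpr (sub_ne_zero.mpr (Ne.symm hx1))
  have hm : 0 < m := ht.trans_le (le_max_left _ _)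
  have hβ : 0 < 2 + β := by linarith [one_add_pos_of_norm_sub_lt hx]
  have hnum : |‖x‖ ^ 2 - 1| ≤ 3 * t := by
    rw [show ‖x‖ ^ 2 - 1 = -(1 - ‖x‖) * (‖x‖ + 1) by ring, abs_mul, abs_neg,
      abs_of_pos (by positivity : 0 < ‖x‖ + 1), mul_comm 3]
    gcongr
    linarith
  have hden : m / (2 + β) ≤ ‖x - z‖ :=
    (div_le_iff₀' hβ).mpr (max_abs_one_sub_norm_dist_le hz hx)
  calc c * |‖x‖ ^ 2 - 1| ^ (α - 1) / ‖x - z‖ ^ e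
      ≤ c * (3 * t) ^ (α - 1) / (m / (2 + β)) ^ e := by
        gcongr
    _ = c * 3 ^ (α - 1) * (2 + β) ^ e * t ^ (α - 1) * m ^ (-e) := by
        rw [Real.mul_rpow zero_le_three ht.le, Real.div_rpow hm.le hβ.le, Real.rpow_neg hm.le]
        field_simp

theorem integral_mul_rpow_div_norm_sub_rpow_le [MeasurableSpace E] [OpensMeasurableSpace E]
    {μ : Measure E} {α c e M : ℝ} (hc : 0 ≤ c) (hα : 1 < α) (he : 0 ≤ e) (hM : 0 ≤ M)
    (hsphere : ∀ᵐ z ∂μ, ‖z‖ = 1)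
    (hball : ∀ r, 0 < r → μ (ball y r) ≤ ENNReal.ofReal (M * r ^ (e + 1 - α)))
    (hx1 : ‖x‖ ≠ 1) (hx2 : ‖x‖ < 2) (hx : ‖x - y‖ < (1 + β) * |1 - ‖x‖|) :
    ∫ z, c * |‖x‖ ^ 2 - 1| ^ (α - 1) / ‖x - z‖ ^ e ∂μ ≤
      c * 3 ^ (α - 1) * (2 + β) ^ e * (2 ^ (e + 1 - α) / (1 - 2 ^ (1 - α))) * M := by
  set t := |1 - ‖x‖|
  have ht : 0 < t := abs_pos.mpr (sub_ne_zero.mpr (Ne.symm hx1))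
  set A := c * 3 ^ (α - 1) * (2 + β) ^ e * t ^ (α - 1)
  have hρ : (2 : ℝ) ^ (1 - α) < 1 := Real.rpow_lt_one_of_one_lt_of_neg one_lt_two (by linarith)
  have hdecay : ∫⁻ z, ENNReal.ofReal (max t (dist z y) ^ (-e)) ∂μ ≤
      ENNReal.ofReal (2 ^ (e + 1 - α) / (1 - 2 ^ (1 - α)) * M * t ^ (1 - α)) := by
    simpa only [show e + 1 - α - e = 1 - α by ring] using
      lintegral_ofReal_max_rpow_neg_le μ y ht he (by linarith) hball
  have hβ : 0 < 2 + β := by linarith [one_add_pos_of_norm_sub_lt hx]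
  have htt : t ^ (α - 1) * t ^ (1 - α) = 1 := by rw [← Real.rpow_add ht]; simp
  refine integral_le_of_lintegral_ofReal_le (by have := sub_pos.mpr hρ; positivity) ?_
  calc ∫⁻ z, ENNReal.ofReal (c * |‖x‖ ^ 2 - 1| ^ (α - 1) / ‖x - z‖ ^ e) ∂μ
      ≤ ∫⁻ z, ENNReal.ofReal A * ENNReal.ofReal (max t (dist z y) ^ (-e)) ∂μ := by
        refine lintegral_mono_ae (hsphere.mono fun z hz => ?_)
        rw [← ENNReal.ofReal_mul (by positivity)]
        exact ENNReal.ofReal_le_ofReal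
          (mul_rpow_div_norm_sub_rpow_le hc hα.le he hx1 hx2 hz hx)
    _ ≤ ENNReal.ofReal A *
          ENNReal.ofReal (2 ^ (e + 1 - α) / (1 - 2 ^ (1 - α)) * M * t ^ (1 - α)) := by
        rw [lintegral_const_mul' _ _ ENNReal.ofReal_ne_top]
        gcongr
    _ = _ := by
        rw [← ENNReal.ofReal_mul (by positivity)]
        congr 1
        linear_combination (c * 3 ^ (α - 1) * (2 + β) ^ e *
          (2 ^ (e + 1 - α) / (1 - 2 ^ (1 - α))) * M) * htt

end Cone

theorem nontangential_maximal_bound_general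
    (d : ℕ) (α c : ℝ) (hα : α ∈ Set.Ioo (1:ℝ) 2) (hc : 0 < c)
    (σ : Measure (EuclideanSpace ℝ (Fin d))) [IsProbabilityMeasure σ]
    (hσinv : ∀ R : EuclideanSpace ℝ (Fin d) ≃ₗᵢ[ℝ] EuclideanSpace ℝ (Fin d),
      Measure.map R σ = σ)
    (P : EuclideanSpace ℝ (Fin d) → EuclideanSpace ℝ (Fin d) → ℝ)
    (hP : ∀ x y : EuclideanSpace ℝ (Fin d), ‖x‖ ≠ 1 → ‖y‖ = 1 →
      P x y = c * |‖x‖ ^ 2 - 1| ^ (α - 1) / ‖x - y‖ ^ ((d : ℝ) + α - 2)) :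
    ∀ β : ℝ, 0 < β → ∃ C : ℝ, 0 < C ∧
      ∀ y : EuclideanSpace ℝ (Fin d), ‖y‖ = 1 →
      ∀ μ : Measure (EuclideanSpace ℝ (Fin d)), IsFiniteMeasure μ →
        μ (Metric.sphere (0 : EuclideanSpace ℝ (Fin d)) 1)ᶜ = 0 →
      ∀ L : ℝ, (∀ r : ℝ, 0 < r →
        (μ (Metric.ball y r)).toReal ≤ L * (σ (Metric.ball y r)).toReal) →
      ∀ x : EuclideanSpace ℝ (Fin d), ‖x‖ ≠ 1 →
        ‖x - y‖ < (1 + β) * |1 - ‖x‖| → ‖x‖ < 2 →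
        ∫ z, P x z ∂μ ≤ C * L := by
  intro β hβ
  obtain ⟨hα1, -⟩ := hα
  set e : ℝ := (d : ℝ) + α - 2
  have hρ : (2 : ℝ) ^ (1 - α) < 1 := Real.rpow_lt_one_of_one_lt_of_neg one_lt_two (by linarith)
  refine ⟨c * 3 ^ (α - 1) * (2 + β) ^ e * (2 ^ (e + 1 - α) / (1 - 2 ^ (1 - α))) * 2 ^ d,
    by have := sub_pos.mpr hρ; positivity, ?_⟩
  intro y hy μ _ hμ L hL x hx1 hcone hx2
  have hd : (1 : ℝ) ≤ d := by
    exact_mod_cast Nat.pos_of_ne_zero (by rintro rfl; simp [Subsingleton.elim y 0] at hy)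
  have hL0 : 0 ≤ L := nonneg_of_forall_toReal_measure_ball_le hL
  have hsphere : ∀ᵐ z ∂μ, ‖z‖ = 1 := by
    filter_upwards [mem_ae_iff.mpr hμ] with z hz using mem_sphere_zero_iff_norm.mp hz
  have hball (r : ℝ) (hr : 0 < r) :
      μ (ball y r) ≤ ENNReal.ofReal (L * 2 ^ d * r ^ (e + 1 - α)) := by
    have hcap := measure_ball_le_of_forall_map_eq hσinv hy hr
    rw [finrank_euclideanSpace_fin] at hcap
    rw [← ENNReal.ofReal_toReal (measure_ne_top μ _), show e + 1 - α = (d : ℝ) - 1 by ring,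
      mul_assoc]
    gcongr
    exact (hL r hr).trans (mul_le_mul_of_nonneg_left
      (ENNReal.toReal_le_of_le_ofReal (by positivity) hcap) hL0)
  calc ∫ z, P x z ∂μ = ∫ z, c * |‖x‖ ^ 2 - 1| ^ (α - 1) / ‖x - z‖ ^ e ∂μ :=
        integral_congr_ae (hsphere.mono fun z hz => hP x z hx1 hz)
    _ ≤ _ := integral_mul_rpow_div_norm_sub_rpow_le hc.le hα1 (by linarith) (by positivity)
          hsphere hball hx1 hx2 hcone
    _ = _ := by ring

theorem nontangential_maximal_bound
    (d : ℕ) (hd : 2 ≤ d) (α c : ℝ) (hα : α ∈ Set.Ioo (1:ℝ) 2) (hc : 0 < c)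
    (σ : Measure (EuclideanSpace ℝ (Fin d))) [IsProbabilityMeasure σ]
    (hσsupp : σ (Metric.sphere (0 : EuclideanSpace ℝ (Fin d)) 1)ᶜ = 0)
    (hσinv : ∀ R : EuclideanSpace ℝ (Fin d) ≃ₗᵢ[ℝ] EuclideanSpace ℝ (Fin d),
      Measure.map R σ = σ)
    (P : EuclideanSpace ℝ (Fin d) → EuclideanSpace ℝ (Fin d) → ℝ)
    (hP : ∀ x y : EuclideanSpace ℝ (Fin d), ‖x‖ ≠ 1 → ‖y‖ = 1 →
      P x y = c * |‖x‖ ^ 2 - 1| ^ (α - 1) / ‖x - y‖ ^ ((d : ℝ) + α - 2)) :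
    ∀ β : ℝ, 0 < β → ∃ C : ℝ, 0 < C ∧
      ∀ y : EuclideanSpace ℝ (Fin d), ‖y‖ = 1 →
      ∀ μ : Measure (EuclideanSpace ℝ (Fin d)), IsFiniteMeasure μ →
        μ (Metric.sphere (0 : EuclideanSpace ℝ (Fin d)) 1)ᶜ = 0 →
      ∀ L : ℝ, (∀ r : ℝ, 0 < r →
        (μ (Metric.ball y r)).toReal ≤ L * (σ (Metric.ball y r)).toReal) →
      ∀ x : EuclideanSpace ℝ (Fin d), ‖x‖ ≠ 1 →
        ‖x - y‖ < (1 + β) * |1 - ‖x‖| → ‖x‖ < 2 →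
        ∫ z, P x z ∂μ ≤ C * L :=
  nontangential_maximal_bound_general d α c hα hc σ hσinv P hP
end

section
/- Let d ≥ 2, α ∈ (1,2), S the unit sphere in ℝ^d with normalized surface measure σ, and P(x,y) = c · ||x|² − 1|^{α−1}/|x − y|^{d+α−2} for x ∉ S, y ∈ S. If f is continuous on S, then sup_{x∈S} | ∫_S P(r x, y) f(y) σ(dy) − φ(r) f(x) | → 0 as r → 1, where φ(r) = ∫_S P(r z, y) σ(dy) (which is independent of z ∈ S by rotation invariance); more precisely, for every δ > 0 and x ∈ S, ∫_{y∈S, |x−y|>δ} P(rx, y) σ(dy) ≤ c' |r² − 1|^{α−1} δ^{2−d−α} for a constant c' depending only on c and d, and this tends to 0 as r → 1 since α > 1. -/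
/-!
For `‖x‖ = ‖y‖ = 1` and `r ≥ 0`, the distance `|1 - r|` from `x` to `r • x` is at most
`|‖r • x‖ - ‖y‖| ≤ ‖r • x - y‖`, so `‖x - y‖ ≤ 2 ‖r • x - y‖`. On the tail `δ < ‖x - y‖` the
kernel is therefore at most `c |r² - 1|^(α-1) (2/δ)^(d+α-2) ≤ c 2^d |r² - 1|^(α-1) δ^(2-d-α)`,
and integrating against the probability measure `σ`, which lives on the sphere, keeps this bound.
It tends to `0` as `r → 1` because `α - 1 > 0`.
-/

open MeasureTheory Filter Topology

lemma norm_sub_le_two_mul_norm_smul_sub {E : Type*} [NormedAddCommGroup E] [NormedSpace ℝ E]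
    {x y : E} (hx : ‖x‖ = 1) (hy : ‖y‖ = 1) {r : ℝ} (hr : 0 ≤ r) :
    ‖x - y‖ ≤ 2 * ‖r • x - y‖ := by
  have hrx : ‖r • x‖ = r := by rw [norm_smul, hx, Real.norm_of_nonneg hr, mul_one]
  have h_radial : ‖x - r • x‖ ≤ ‖r • x - y‖ := by
    calc ‖x - r • x‖ = ‖(1 - r) • x‖ := by rw [sub_smul, one_smul]
      _ = |‖r • x‖ - ‖y‖| := by
          rw [norm_smul, hx, hrx, hy, Real.norm_eq_abs, mul_one, abs_sub_comm]
      _ ≤ ‖r • x - y‖ := abs_norm_sub_norm_le _ _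
  calc ‖x - y‖ = ‖(x - r • x) + (r • x - y)‖ := by rw [sub_add_sub_cancel]
    _ ≤ ‖x - r • x‖ + ‖r • x - y‖ := norm_add_le _ _
    _ ≤ 2 * ‖r • x - y‖ := by linarith

lemma inv_rpow_le_two_rpow_mul_rpow_neg {a δ e s : ℝ} (hδ : 0 < δ) (hδa : δ < 2 * a)
    (he : 0 ≤ e) (hes : e ≤ s) :
    (a ^ e)⁻¹ ≤ 2 ^ s * δ ^ (-e) := by
  have hδ2 : 0 < δ / 2 := half_pos hδ
  calc (a ^ e)⁻¹ ≤ ((δ / 2) ^ e)⁻¹ := by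
        gcongr
        linarith
    _ = 2 ^ e * δ ^ (-e) := by
        rw [Real.div_rpow hδ.le zero_le_two, inv_div, Real.rpow_neg hδ.le, div_eq_mul_inv]
    _ ≤ 2 ^ s * δ ^ (-e) := by
        gcongr
        exact one_le_two

lemma setIntegral_le_of_ae_norm_le {X : Type*} [MeasurableSpace X] {μ : Measure X}
    [IsProbabilityMeasure μ] {f : X → ℝ} {s : Set X} {C : ℝ} (hC : 0 ≤ C)
    (h : ∀ᵐ x ∂μ, x ∈ s → ‖f x‖ ≤ C) :
    ∫ x in s, f x ∂μ ≤ C :=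
  calc ∫ x in s, f x ∂μ ≤ ‖∫ x in s, f x ∂μ‖ := Real.le_norm_self _
    _ ≤ C * μ.real s := norm_setIntegral_le_of_norm_le_const_ae' (measure_lt_top _ _) h
    _ ≤ C := mul_le_of_le_one_right hC measureReal_le_one

lemma tendsto_abs_sq_sub_one_rpow {p : ℝ} (hp : 0 < p) :
    Tendsto (fun r : ℝ => |r ^ 2 - 1| ^ p) (𝓝 1) (𝓝 0) := by
  have hcont : Continuous fun r : ℝ => |r ^ 2 - 1| ^ p := by fun_prop (disch := positivity)
  simpa [Real.zero_rpow hp.ne'] using hcont.tendsto 1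

theorem poisson_kernel_sphere_tail_estimate_general
    (d : ℕ) (hd : 2 ≤ d) (α c : ℝ) (hα : α ∈ Set.Ioo (1:ℝ) 2) (hc : 0 < c)
    (σ : Measure (EuclideanSpace ℝ (Fin d))) [IsProbabilityMeasure σ]
    (hσsupp : σ (Metric.sphere (0 : EuclideanSpace ℝ (Fin d)) 1)ᶜ = 0)
    (P : EuclideanSpace ℝ (Fin d) → EuclideanSpace ℝ (Fin d) → ℝ)
    (hP : ∀ x y : EuclideanSpace ℝ (Fin d), ‖x‖ ≠ 1 → ‖y‖ = 1 →
      P x y = c * |‖x‖ ^ 2 - 1| ^ (α - 1) / ‖x - y‖ ^ ((d : ℝ) + α - 2)) :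
    ∃ c' : ℝ, 0 < c' ∧
      (∀ δ : ℝ, 0 < δ → ∀ x : EuclideanSpace ℝ (Fin d), ‖x‖ = 1 →
        ∀ r : ℝ, 0 ≤ r → r ≠ 1 →
          ∫ y in {y | δ < ‖x - y‖}, P (r • x) y ∂σ
            ≤ c' * |r ^ 2 - 1| ^ (α - 1) * δ ^ (2 - (d : ℝ) - α)) ∧
      (∀ δ : ℝ, 0 < δ →
        Tendsto (fun r : ℝ => c' * |r ^ 2 - 1| ^ (α - 1) * δ ^ (2 - (d : ℝ) - α))
          (nhdsWithin 1 {(1 : ℝ)}ᶜ) (nhds 0)) := by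
  obtain ⟨hα1, hα2⟩ := hα
  have hd2 : (2 : ℝ) ≤ d := by exact_mod_cast hd
  refine ⟨c * 2 ^ (d : ℝ), by positivity, fun δ hδ x hx r hr hr1 => ?_, fun δ _ => ?_⟩
  · have hrx : ‖r • x‖ = r := by rw [norm_smul, hx, Real.norm_of_nonneg hr, mul_one]
    have h_on_sphere : ∀ᵐ y ∂σ, y ∈ Metric.sphere 0 1 := mem_ae_iff.mpr hσsupp
    refine setIntegral_le_of_ae_norm_le (by positivity) ?_
    filter_upwards [h_on_sphere] with y hy hδy
    rw [mem_sphere_zero_iff_norm] at hy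
    have hdist : δ < 2 * ‖r • x - y‖ :=
      lt_of_lt_of_le hδy (norm_sub_le_two_mul_norm_smul_sub hx hy hr)
    have hexp : (2 : ℝ) - d - α = -((d : ℝ) + α - 2) := by ring
    have hkernel := inv_rpow_le_two_rpow_mul_rpow_neg (e := (d : ℝ) + α - 2) (s := d) hδ hdist
      (by linarith) (by linarith)
    rw [hP _ _ (hrx.symm ▸ hr1) hy, hrx, hexp, div_eq_mul_inv, Real.norm_of_nonneg (by positivity)]
    calc c * |r ^ 2 - 1| ^ (α - 1) * (‖r • x - y‖ ^ ((d : ℝ) + α - 2))⁻¹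
        ≤ c * |r ^ 2 - 1| ^ (α - 1) * (2 ^ (d : ℝ) * δ ^ (-((d : ℝ) + α - 2))) := by gcongr
      _ = c * 2 ^ (d : ℝ) * |r ^ 2 - 1| ^ (α - 1) * δ ^ (-((d : ℝ) + α - 2)) := by ring
  · have h := ((tendsto_abs_sq_sub_one_rpow (sub_pos.mpr hα1)).const_mul
      (c * 2 ^ (d : ℝ))).mul_const (δ ^ (2 - (d : ℝ) - α))
    simpa using h.mono_left nhdsWithin_le_nhds

theorem poisson_kernel_sphere_tail_estimate
    (d : ℕ) (hd : 2 ≤ d) (α c : ℝ) (hα : α ∈ Set.Ioo (1:ℝ) 2) (hc : 0 < c)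
    (σ : Measure (EuclideanSpace ℝ (Fin d))) [IsProbabilityMeasure σ]
    (hσsupp : σ (Metric.sphere (0 : EuclideanSpace ℝ (Fin d)) 1)ᶜ = 0)
    (hσinv : ∀ R : EuclideanSpace ℝ (Fin d) ≃ₗᵢ[ℝ] EuclideanSpace ℝ (Fin d),
      Measure.map R σ = σ)
    (P : EuclideanSpace ℝ (Fin d) → EuclideanSpace ℝ (Fin d) → ℝ)
    (hP : ∀ x y : EuclideanSpace ℝ (Fin d), ‖x‖ ≠ 1 → ‖y‖ = 1 →
      P x y = c * |‖x‖ ^ 2 - 1| ^ (α - 1) / ‖x - y‖ ^ ((d : ℝ) + α - 2)) :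
    ∃ c' : ℝ, 0 < c' ∧
      (∀ δ : ℝ, 0 < δ → ∀ x : EuclideanSpace ℝ (Fin d), ‖x‖ = 1 →
        ∀ r : ℝ, 0 ≤ r → r ≠ 1 →
          ∫ y in {y | δ < ‖x - y‖}, P (r • x) y ∂σ
            ≤ c' * |r ^ 2 - 1| ^ (α - 1) * δ ^ (2 - (d : ℝ) - α)) ∧
      (∀ δ : ℝ, 0 < δ →
        Tendsto (fun r : ℝ => c' * |r ^ 2 - 1| ^ (α - 1) * δ ^ (2 - (d : ℝ) - α))
          (nhdsWithin 1 {(1 : ℝ)}ᶜ) (nhds 0)) :=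
  poisson_kernel_sphere_tail_estimate_general d hd α c hα hc σ hσsupp P hP
end

section
/- Let d ≥ 2, α ∈ (1,2), and let ω_α be the probability measure on ℝ^{d−1} with density C₃ / (|x̄|² + 1)^{(d+α−2)/2} with respect to Lebesgue measure, where C₃ = π^{(1−d)/2} Γ((α+d)/2−1)/Γ((α−1)/2). For ε > 0 there exists c₁ = c₁(ε, α, d) > 0 such that for every ȳ ∈ ℝ^{d−1} and every t with 0 < |t| < ε, ∫_{ℝ^{d−1}} M((x̄,t), ȳ) ω_α(dx̄) ≤ c₁, where M((x̄,t), ȳ) = |t|^{α−1} (|ȳ|² + 1)^{(d+α−2)/2} / (|x̄ − ȳ|² + t²)^{(d+α−2)/2}. -/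
/-!
Since `‖y‖² + 1 ≤ 2 (‖x‖² + 1) + 2 (‖x - y‖² + t²)`, the kernel integrated against the density
`(‖x‖² + 1)^(-p)`, `2p = d + α - 2`, is bounded pointwise by
`4^p |t|^(α-1) ((‖x - y‖² + t²)^(-p) + (‖x‖² + 1)^(-p))`. As `2p > d - 1`, the function
`(‖x‖² + 1)^(-p)` is integrable on `ℝ^(d-1)`. Translating by `y` and scaling by `|t|`, the first
term integrates to `|t|^(α-1) |t|^(d-1-2p) = 1` times that integral, the second to at most
`ε^(α-1)` times it.
-/

open MeasureTheory Module ENNReal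

theorem Real.add_rpow_le_two_rpow_mul_add_rpow {a b p : ℝ} (ha : 0 ≤ a) (hb : 0 ≤ b)
    (hp : 0 ≤ p) : (a + b) ^ p ≤ 2 ^ p * (a ^ p + b ^ p) := by
  have hmax : max a b ^ p ≤ a ^ p + b ^ p := by
    rcases le_total a b with h | h
    · simpa [max_eq_right h] using Real.rpow_nonneg ha p
    · simpa [max_eq_left h] using Real.rpow_nonneg hb p
  calc (a + b) ^ p ≤ (2 * max a b) ^ p := by
        gcongr; linarith [le_max_left a b, le_max_right a b]
    _ = 2 ^ p * max a b ^ p := Real.mul_rpow zero_le_two (le_max_of_le_left ha)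
    _ ≤ 2 ^ p * (a ^ p + b ^ p) := by gcongr

section

variable {E : Type*} [NormedAddCommGroup E]

theorem sq_norm_add_one_rpow_le {p : ℝ} (hp : 0 ≤ p) (x y : E) (t : ℝ) :
    (‖y‖ ^ 2 + 1) ^ p ≤ 4 ^ p * ((‖x‖ ^ 2 + 1) ^ p + (‖x - y‖ ^ 2 + t ^ 2) ^ p) := by
  have hy : ‖y‖ ≤ ‖x‖ + ‖x - y‖ := by simpa using norm_sub_le x (x - y)
  calc (‖y‖ ^ 2 + 1) ^ p ≤ (2 * (‖x‖ ^ 2 + 1) + 2 * (‖x - y‖ ^ 2 + t ^ 2)) ^ p := by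
        gcongr ?_ ^ p
        nlinarith [pow_le_pow_left₀ (norm_nonneg y) hy 2, sq_nonneg (‖x‖ - ‖x - y‖), sq_nonneg t]
    _ ≤ 2 ^ p * ((2 * (‖x‖ ^ 2 + 1)) ^ p + (2 * (‖x - y‖ ^ 2 + t ^ 2)) ^ p) :=
        Real.add_rpow_le_two_rpow_mul_add_rpow (by positivity) (by positivity) hp
    _ = 4 ^ p * ((‖x‖ ^ 2 + 1) ^ p + (‖x - y‖ ^ 2 + t ^ 2) ^ p) := by
        rw [Real.mul_rpow zero_le_two (by positivity), Real.mul_rpow zero_le_two (by positivity),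
          ← mul_add, ← mul_assoc, ← Real.mul_rpow zero_le_two zero_le_two]
        norm_num

theorem div_sq_norm_add_one_rpow_le {p : ℝ} (hp : 0 ≤ p) (x y : E) {t : ℝ} (ht : t ≠ 0) :
    (‖y‖ ^ 2 + 1) ^ p / ((‖x‖ ^ 2 + 1) ^ p * (‖x - y‖ ^ 2 + t ^ 2) ^ p)
      ≤ 4 ^ p * (((‖x - y‖ ^ 2 + t ^ 2) ^ p)⁻¹ + ((‖x‖ ^ 2 + 1) ^ p)⁻¹) := by
  have hA : 0 < (‖x‖ ^ 2 + 1) ^ p := by positivity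
  have hB : 0 < (‖x - y‖ ^ 2 + t ^ 2) ^ p := by positivity
  rw [div_le_iff₀ (mul_pos hA hB)]
  refine (sq_norm_add_one_rpow_le hp x y t).trans_eq ?_
  field_simp

end

section

variable {E : Type*} [NormedAddCommGroup E] [NormedSpace ℝ E] [MeasurableSpace E] [BorelSpace E]
  [FiniteDimensional ℝ E] (μ : Measure E) [μ.IsAddHaarMeasure]

theorem MeasureTheory.Measure.lintegral_comp_smul (f : E → ℝ≥0∞) {R : ℝ} (hR : R ≠ 0) :
    ∫⁻ x, f (R • x) ∂μ = ENNReal.ofReal |(R ^ finrank ℝ E)⁻¹| * ∫⁻ x, f x ∂μ := by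
  rw [← smul_eq_mul, ← lintegral_smul_measure, ← μ.map_addHaar_smul hR]
  exact (lintegral_map_equiv f (Homeomorph.smul (Units.mk0 R hR)).toMeasurableEquiv).symm

theorem lintegral_inv_sq_norm_add_one_rpow_lt_top {p : ℝ} (hp : (finrank ℝ E : ℝ) < 2 * p) :
    ∫⁻ x, ENNReal.ofReal (((‖x‖ ^ 2 + 1) ^ p)⁻¹) ∂μ < ∞ := by
  convert (integrable_rpow_neg_one_add_norm_sq (μ := μ) hp).lintegral_lt_top using 4 with x
  rw [neg_div, mul_div_cancel_left₀ p two_ne_zero, Real.rpow_neg (by positivity), add_comm]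

theorem lintegral_inv_sq_norm_add_sq_rpow (p : ℝ) {s : ℝ} (hs : 0 < s) :
    ∫⁻ x, ENNReal.ofReal (((‖x‖ ^ 2 + s ^ 2) ^ p)⁻¹) ∂μ
      = ENNReal.ofReal (s ^ ((finrank ℝ E : ℝ) - 2 * p))
        * ∫⁻ x, ENNReal.ofReal (((‖x‖ ^ 2 + 1) ^ p)⁻¹) ∂μ := by
  have hscale : ∀ x : E, ENNReal.ofReal (((‖s • x‖ ^ 2 + s ^ 2) ^ p)⁻¹)
      = ENNReal.ofReal (s ^ (-(2 * p))) * ENNReal.ofReal (((‖x‖ ^ 2 + 1) ^ p)⁻¹) := by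
    intro x
    rw [← ENNReal.ofReal_mul (by positivity), norm_smul, Real.norm_of_nonneg hs.le,
      show (s * ‖x‖) ^ 2 + s ^ 2 = s ^ 2 * (‖x‖ ^ 2 + 1) by ring,
      Real.mul_rpow (by positivity) (by positivity), mul_inv, ← Real.rpow_natCast,
      ← Real.rpow_mul hs.le, Real.rpow_neg hs.le]
    norm_num
  have hsubst := μ.lintegral_comp_smul (fun x => ENNReal.ofReal (((‖x‖ ^ 2 + s ^ 2) ^ p)⁻¹)) hs.ne'
  simp only [hscale, lintegral_const_mul' _ _ ENNReal.ofReal_ne_top] at hsubst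
  have hsn : 0 < s ^ finrank ℝ E := by positivity
  calc ∫⁻ x, ENNReal.ofReal (((‖x‖ ^ 2 + s ^ 2) ^ p)⁻¹) ∂μ
      = ENNReal.ofReal (s ^ finrank ℝ E) * (ENNReal.ofReal |(s ^ finrank ℝ E)⁻¹|
          * ∫⁻ x, ENNReal.ofReal (((‖x‖ ^ 2 + s ^ 2) ^ p)⁻¹) ∂μ) := by
        rw [← mul_assoc, ← ENNReal.ofReal_mul hsn.le, abs_of_pos (inv_pos.2 hsn),
          mul_inv_cancel₀ hsn.ne', ENNReal.ofReal_one, one_mul]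
    _ = ENNReal.ofReal (s ^ ((finrank ℝ E : ℝ) - 2 * p))
        * ∫⁻ x, ENNReal.ofReal (((‖x‖ ^ 2 + 1) ^ p)⁻¹) ∂μ := by
        rw [← hsubst, ← mul_assoc, ← ENNReal.ofReal_mul hsn.le, ← Real.rpow_natCast,
          ← Real.rpow_add hs, sub_eq_add_neg]

theorem lintegral_martin_kernel_withDensity_le {p C r : ℝ} (hp : 0 ≤ p) (hr : 0 ≤ r) (y : E)
    {t : ℝ} (ht : t ≠ 0) :
    ∫⁻ x, ENNReal.ofReal (r * (‖y‖ ^ 2 + 1) ^ p / (‖x - y‖ ^ 2 + t ^ 2) ^ p)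
        ∂μ.withDensity (fun x => ENNReal.ofReal (C / (‖x‖ ^ 2 + 1) ^ p))
      ≤ ENNReal.ofReal C * ENNReal.ofReal (4 ^ p * r * (|t| ^ ((finrank ℝ E : ℝ) - 2 * p) + 1))
        * ∫⁻ x, ENNReal.ofReal (((‖x‖ ^ 2 + 1) ^ p)⁻¹) ∂μ := by
  have hpointwise (x : E) :
      ENNReal.ofReal (C / (‖x‖ ^ 2 + 1) ^ p)
          * ENNReal.ofReal (r * (‖y‖ ^ 2 + 1) ^ p / (‖x - y‖ ^ 2 + t ^ 2) ^ p)
        ≤ ENNReal.ofReal C * (ENNReal.ofReal (4 ^ p * r)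
          * (ENNReal.ofReal (((‖x - y‖ ^ 2 + t ^ 2) ^ p)⁻¹)
            + ENNReal.ofReal (((‖x‖ ^ 2 + 1) ^ p)⁻¹))) := by
    have hA : 0 < (‖x‖ ^ 2 + 1) ^ p := by positivity
    have hB : 0 < (‖x - y‖ ^ 2 + t ^ 2) ^ p := by positivity
    calc ENNReal.ofReal (C / (‖x‖ ^ 2 + 1) ^ p)
          * ENNReal.ofReal (r * (‖y‖ ^ 2 + 1) ^ p / (‖x - y‖ ^ 2 + t ^ 2) ^ p)
        = ENNReal.ofReal C * ENNReal.ofReal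
            (r * ((‖y‖ ^ 2 + 1) ^ p / ((‖x‖ ^ 2 + 1) ^ p * (‖x - y‖ ^ 2 + t ^ 2) ^ p))) := by
          rw [div_eq_mul_inv C, ENNReal.ofReal_mul' (inv_pos.2 hA).le, mul_assoc,
            ← ENNReal.ofReal_mul (inv_pos.2 hA).le]
          congr 2
          field_simp
      _ ≤ ENNReal.ofReal C * ENNReal.ofReal (4 ^ p * r
            * (((‖x - y‖ ^ 2 + t ^ 2) ^ p)⁻¹ + ((‖x‖ ^ 2 + 1) ^ p)⁻¹)) := by
          gcongr ENNReal.ofReal C * ENNReal.ofReal ?_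
          rw [mul_comm (4 ^ p), mul_assoc]
          exact mul_le_mul_of_nonneg_left (div_sq_norm_add_one_rpow_le hp x y ht) hr
      _ = _ := by
          rw [ENNReal.ofReal_mul (by positivity),
            ENNReal.ofReal_add (inv_pos.2 hB).le (inv_pos.2 hA).le]
  have hmeas : Measurable fun x : E => ENNReal.ofReal (((‖x - y‖ ^ 2 + t ^ 2) ^ p)⁻¹) := by
    fun_prop
  rw [lintegral_withDensity_eq_lintegral_mul _ (by fun_prop) (by fun_prop)]
  refine (lintegral_mono fun x => hpointwise x).trans_eq ?_
  rw [lintegral_const_mul' _ _ ENNReal.ofReal_ne_top,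
    lintegral_const_mul' _ _ ENNReal.ofReal_ne_top, lintegral_add_left hmeas,
    lintegral_sub_right_eq_self (fun x => ENNReal.ofReal (((‖x‖ ^ 2 + t ^ 2) ^ p)⁻¹)) y,
    ← sq_abs t, lintegral_inv_sq_norm_add_sq_rpow μ p (abs_pos.2 ht),
    ENNReal.ofReal_mul (by positivity : (0 : ℝ) ≤ 4 ^ p * r),
    ENNReal.ofReal_add (by positivity) zero_le_one,
    ENNReal.ofReal_one]
  ring

end

theorem martin_integral_bound_halfspace_general (d : ℕ) (hd : 2 ≤ d)
    (α : ℝ) (hα : α ∈ Set.Ioo (1:ℝ) 2)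
    (C₃ : ℝ)
    (ω : Measure (EuclideanSpace ℝ (Fin (d - 1))))
    (hω : ω = volume.withDensity (fun x : EuclideanSpace ℝ (Fin (d - 1)) =>
      ENNReal.ofReal (C₃ / (‖x‖ ^ 2 + 1) ^ (((d : ℝ) + α - 2) / 2))))
    (ε : ℝ) :
    ∃ c₁ : ℝ, 0 < c₁ ∧
      ∀ (y : EuclideanSpace ℝ (Fin (d - 1))) (t : ℝ), 0 < |t| → |t| < ε →
        ∫ x, |t| ^ (α - 1) * (‖y‖ ^ 2 + 1) ^ (((d : ℝ) + α - 2) / 2)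
            / (‖x - y‖ ^ 2 + t ^ 2) ^ (((d : ℝ) + α - 2) / 2) ∂ω
          ≤ c₁ := by
  obtain ⟨hα1, -⟩ := hα
  set p : ℝ := ((d : ℝ) + α - 2) / 2
  have hrank : (finrank ℝ (EuclideanSpace ℝ (Fin (d - 1))) : ℝ) = d - 1 := by
    rw [finrank_euclideanSpace_fin, Nat.cast_sub (by omega), Nat.cast_one]
  have hd' : (2 : ℝ) ≤ d := by exact_mod_cast hd
  have h2p : (d - 1 : ℝ) < 2 * p := by simp only [p]; linarith
  have hp : 0 ≤ p := by linarith
  set I := ∫⁻ x : EuclideanSpace ℝ (Fin (d - 1)), ENNReal.ofReal (((‖x‖ ^ 2 + 1) ^ p)⁻¹)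
  have hI : I ≠ ∞ := (lintegral_inv_sq_norm_add_one_rpow_lt_top volume (hrank ▸ h2p)).ne
  refine ⟨(ENNReal.ofReal C₃ * ENNReal.ofReal (4 ^ p * (1 + ε ^ (α - 1))) * I).toReal + 1,
    by positivity, fun y t ht htε => ?_⟩
  have hexp :
      |t| ^ (α - 1) * (|t| ^ ((finrank ℝ (EuclideanSpace ℝ (Fin (d - 1))) : ℝ) - 2 * p) + 1)
        = 1 + |t| ^ (α - 1) := by
    rw [mul_add, ← Real.rpow_add ht, hrank, show α - 1 + (d - 1 - 2 * p) = 0 by ring,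
      Real.rpow_zero, mul_one]
  have hbound := lintegral_martin_kernel_withDensity_le volume (C := C₃) hp
    (Real.rpow_nonneg (abs_nonneg t) (α - 1)) y (abs_pos.1 ht)
  rw [← hω, mul_assoc (4 ^ p), hexp] at hbound
  calc _ = (∫⁻ x, ENNReal.ofReal (|t| ^ (α - 1) * (‖y‖ ^ 2 + 1) ^ p
          / (‖x - y‖ ^ 2 + t ^ 2) ^ p) ∂ω).toReal :=
        integral_eq_lintegral_of_nonneg_ae (ae_of_all _ fun x => by positivity)
          (by fun_prop : Measurable _).aestronglyMeasurable
    _ ≤ (ENNReal.ofReal C₃ * ENNReal.ofReal (4 ^ p * (1 + ε ^ (α - 1))) * I).toReal := by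
        refine ENNReal.toReal_mono (by finiteness) (hbound.trans ?_)
        gcongr
    _ ≤ _ := le_add_of_nonneg_right zero_le_one

theorem martin_integral_bound_halfspace (d : ℕ) (hd : 2 ≤ d)
    (α : ℝ) (hα : α ∈ Set.Ioo (1:ℝ) 2)
    (C₃ : ℝ)
    (hC₃ : C₃ = Real.pi ^ ((1 - (d : ℝ)) / 2) * Real.Gamma ((α + d) / 2 - 1)
      / Real.Gamma ((α - 1) / 2))
    (ω : Measure (EuclideanSpace ℝ (Fin (d - 1))))
    (hω : ω = volume.withDensity (fun x : EuclideanSpace ℝ (Fin (d - 1)) =>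
      ENNReal.ofReal (C₃ / (‖x‖ ^ 2 + 1) ^ (((d : ℝ) + α - 2) / 2))))
    (ε : ℝ) (hε : 0 < ε) :
    ∃ c₁ : ℝ, 0 < c₁ ∧
      ∀ (y : EuclideanSpace ℝ (Fin (d - 1))) (t : ℝ), 0 < |t| → |t| < ε →
        ∫ x, |t| ^ (α - 1) * (‖y‖ ^ 2 + 1) ^ (((d : ℝ) + α - 2) / 2)
            / (‖x - y‖ ^ 2 + t ^ 2) ^ (((d : ℝ) + α - 2) / 2) ∂ω
          ≤ c₁ :=
  martin_integral_bound_halfspace_general d hd α hα C₃ ω hω ε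
end
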